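/- (Theorem 1: controller for reachability.) Consider the system ẋ = f(x) + g(x)u with f, g locally Lipschitz and g(x)g(x)ᵀ positive definite, and the reachability funnel (ρ_L, ρ_U) built from η, c̲_i, c̄_i, l_i > 0, ρ_{i,∞} ∈ (0,1). With the funnel controller û (gain k > 0) built from this funnel, every admissible closed-loop solution x : [0,∞) → ℝⁿ satisfies: (i) ρ_{i,L}(t) < x_i(t) < ρ_{i,U}(t) and X̲_i < x_i(t) < X̄_i for all t ≥ 0 and all i; and (ii) if a target set T ⊆ ℝⁿ contains the rectangle ∏_{i=1}^{n}[η_i − c̲_i ρ'_i, η_i + c̄_i ρ'_i] for some ρ'_i > ρ_{i,∞}, then there exists a finite time t* ≥ 0 with x(t*) ∈ T. -/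

import Mathlib

/-!
In the transformed error `ε = ln((1 + ê)/(1 - ê))` the closed loop reads
`d/dt ε² = ξ̂ ε (2 fᵢ(x) - (ρ̇ᵤ + ρ̇ₗ)) - 2 k ξ̂² ε²`: the controller cancels the input
matrix and the term coming from the shrinking funnel width. Since `ξ̂ ≥ 4 / ρ_d` and `f(x)`, `ρ̇`
are bounded on every compact time interval, `ε²` decreases as soon as `|ε|` is large, so `ε`
stays bounded on `[0, T)` whenever the state is inside the funnel there. Bounded `ε` keeps `ê`
uniformly away from `±1`, so by continuity the state is still strictly inside at `T`; hence it
never leaves the funnel. The reachability funnel lies in the box `[X̲, X̄]` and shrinks to the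
rectangle with `ρᵢ,∞` in place of `ρ'ᵢ`, so it eventually lies inside the target rectangle.
-/

open Matrix Set

/-- Normalized error `ê = (2z − (U + L))/(U − L)`. -/
noncomputable def nerr (L U z : ℝ) : ℝ := (2 * z - (U + L)) / (U - L)

/-- Transformed error `ε̂ = ln((1 + ê)/(1 − ê))`. -/
noncomputable def terr (L U z : ℝ) : ℝ := Real.log ((1 + nerr L U z) / (1 - nerr L U z))

/-- Diagonal gain entry `ξ̂ = 4/((U − L)(1 − ê²))`. -/
noncomputable def xhat (L U z : ℝ) : ℝ := 4 / ((U - L) * (1 - (nerr L U z) ^ 2))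

/-- The funnel controller
`û(y,t) = −g(y)ᵀ(g(y)g(y)ᵀ)⁻¹ (k ξ̂(y,t) ε̂(y,t) − ½ γ̇_d(t) ê(y,t))`. -/
noncomputable def funnelController {n m : ℕ} (k : ℝ)
    (g : (Fin n → ℝ) → Matrix (Fin n) (Fin m) ℝ)
    (γL γU γL' γU' : ℝ → Fin n → ℝ) (y : Fin n → ℝ) (t : ℝ) : Fin m → ℝ :=
  -((g y)ᵀ.mulVec (((g y * (g y)ᵀ)⁻¹).mulVec (fun i =>
      k * xhat (γL t i) (γU t i) (y i) * terr (γL t i) (γU t i) (y i)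
        - (1 / 2) * (γU' t i - γL' t i) * nerr (γL t i) (γU t i) (y i))))

/-- Reachability funnel function `ρᵢ(t) = (1 − ρ_{i,∞})·e^{−lᵢt} + ρ_{i,∞}`. -/
noncomputable def rhoFun (ρinf l t : ℝ) : ℝ := (1 - ρinf) * Real.exp (-l * t) + ρinf

/-- Lower reachability funnel boundary `ρ_{i,L}(t) = ηᵢ − c̲ᵢ ρᵢ(t)` with `c̲ᵢ = ηᵢ − X̲ᵢ`. -/
noncomputable def rhoL {n : ℕ} (η Xlow l ρinf : Fin n → ℝ) : ℝ → Fin n → ℝ :=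
  fun t i => η i - (η i - Xlow i) * rhoFun (ρinf i) (l i) t

/-- Upper reachability funnel boundary `ρ_{i,U}(t) = ηᵢ + c̄ᵢ ρᵢ(t)` with `c̄ᵢ = X̄ᵢ − ηᵢ`. -/
noncomputable def rhoU {n : ℕ} (η Xhigh l ρinf : Fin n → ℝ) : ℝ → Fin n → ℝ :=
  fun t i => η i + (Xhigh i - η i) * rhoFun (ρinf i) (l i) t

/-- Time derivative of the lower reachability funnel boundary. -/
noncomputable def rhoL' {n : ℕ} (η Xlow l ρinf : Fin n → ℝ) : ℝ → Fin n → ℝ :=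
  fun t i => (η i - Xlow i) * (l i * ((1 - ρinf i) * Real.exp (-(l i) * t)))

/-- Time derivative of the upper reachability funnel boundary. -/
noncomputable def rhoU' {n : ℕ} (η Xhigh l ρinf : Fin n → ℝ) : ℝ → Fin n → ℝ :=
  fun t i => -((Xhigh i - η i) * (l i * ((1 - ρinf i) * Real.exp (-(l i) * t))))

open Filter Topology

theorem mapsTo_Ici_of_forall_Ico {X : Type*} [TopologicalSpace X] {γ : ℝ → X} {V : Set X}
    {a : ℝ} (hγ : ContinuousOn γ (Ici a)) (hV : IsOpen V) (ha : γ a ∈ V)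
    (hstep : ∀ T > a, MapsTo γ (Ico a T) V → γ T ∈ V) : MapsTo γ (Ici a) V := by
  by_contra hexit
  set C := Ici a ∩ γ ⁻¹' Vᶜ
  have hC : IsClosed C := hγ.preimage_isClosed_of_isClosed isClosed_Ici hV.isClosed_compl
  have hne : C.Nonempty := by
    simp only [MapsTo, not_forall] at hexit
    obtain ⟨t, ht, hγt⟩ := hexit
    exact ⟨t, ht, hγt⟩
  have hbdd : BddBelow C := ⟨a, fun _ h => h.1⟩
  obtain ⟨hτa, hτ⟩ := hC.csInf_mem hne hbdd
  have hτ_gt : a < sInf C := hτa.lt_of_ne fun h => hτ (h ▸ ha)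
  refine hτ (hstep _ hτ_gt fun s hs => ?_)
  by_contra hs'
  exact (csInf_le hbdd ⟨hs.1, hs'⟩).not_gt hs.2

theorem abs_nerr_lt_one_iff {L U z : ℝ} (hLU : L < U) :
    |nerr L U z| < 1 ↔ L < z ∧ z < U := by
  rw [nerr, abs_div, abs_of_pos (sub_pos.2 hLU), div_lt_one (sub_pos.2 hLU), abs_lt]
  constructor <;> rintro ⟨h1, h2⟩ <;> constructor <;> linarith

theorem abs_nerr_le_of_abs_terr_le {L U z R : ℝ} (hz : L < z ∧ z < U)
    (hR : |terr L U z| ≤ R) : |nerr L U z| ≤ (Real.exp R - 1) / (Real.exp R + 1) := by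
  obtain ⟨he₁, he₂⟩ := abs_lt.1 ((abs_nerr_lt_one_iff (hz.1.trans hz.2)).2 hz)
  set e := nerr L U z
  have hE := Real.exp_pos R
  have hq : 0 < (1 + e) / (1 - e) := div_pos (by linarith) (by linarith)
  obtain ⟨hlo, hhi⟩ := abs_le.1 hR
  have hup : 1 + e ≤ Real.exp R * (1 - e) :=
    (div_le_iff₀ (by linarith)).1 ((Real.log_le_iff_le_exp hq).1 hhi)
  have hdown : Real.exp (-R) * (1 - e) ≤ 1 + e :=
    (le_div_iff₀ (by linarith)).1 ((Real.le_log_iff_exp_le hq).1 hlo)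
  rw [Real.exp_neg, inv_mul_le_iff₀ hE] at hdown
  rw [le_div_iff₀ (by linarith), ← abs_of_pos (by linarith : 0 < Real.exp R + 1), ← abs_mul,
    abs_le]
  constructor <;> linarith

theorem four_le_xhat_mul {L U z : ℝ} (hz : L < z ∧ z < U) :
    4 ≤ xhat L U z * (U - L) := by
  have hd : 0 < U - L := by linarith [hz.1, hz.2]
  have he := (abs_nerr_lt_one_iff (hz.1.trans hz.2)).2 hz
  have h1 : 0 < 1 - nerr L U z ^ 2 := by nlinarith [sq_abs (nerr L U z), abs_nonneg (nerr L U z)]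
  have h2 : 1 - nerr L U z ^ 2 ≤ 1 := by nlinarith
  rw [xhat, div_mul_eq_mul_div, le_div_iff₀ (mul_pos hd h1)]
  nlinarith

theorem xhat_pos {L U z : ℝ} (hz : L < z ∧ z < U) : 0 < xhat L U z := by
  have hd : 0 < U - L := by linarith [hz.1, hz.2]
  exact pos_of_mul_pos_left ((by norm_num : (0 : ℝ) < 4).trans_le (four_le_xhat_mul hz)) hd.le

section Derivatives

variable {Lf Uf z : ℝ → ℝ} {L' U' z' t : ℝ}

theorem hasDerivAt_nerr (hL : HasDerivAt Lf L' t) (hU : HasDerivAt Uf U' t)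
    (hz : HasDerivAt z z' t) (hLU : Lf t < Uf t) :
    HasDerivAt (fun s => nerr (Lf s) (Uf s) (z s))
      ((2 * z' - (U' + L') - nerr (Lf t) (Uf t) (z t) * (U' - L')) / (Uf t - Lf t)) t := by
  have hd : Uf t - Lf t ≠ 0 := (sub_pos.2 hLU).ne'
  refine (((hz.const_mul 2).sub (hU.add hL)).div (hU.sub hL) hd).congr_deriv ?_
  simp only [Pi.add_apply, Pi.sub_apply, nerr]
  field_simp

theorem hasDerivAt_terr (hL : HasDerivAt Lf L' t) (hU : HasDerivAt Uf U' t)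
    (hz : HasDerivAt z z' t) (hin : Lf t < z t ∧ z t < Uf t) :
    HasDerivAt (fun s => terr (Lf s) (Uf s) (z s))
      (xhat (Lf t) (Uf t) (z t) / 2 *
        (2 * z' - (U' + L') - nerr (Lf t) (Uf t) (z t) * (U' - L'))) t := by
  have hLU : Lf t < Uf t := hin.1.trans hin.2
  obtain ⟨he₁, he₂⟩ := abs_lt.1 ((abs_nerr_lt_one_iff hLU).2 hin)
  have he := hasDerivAt_nerr hL hU hz hLU
  have hq : (1 + nerr (Lf t) (Uf t) (z t)) / (1 - nerr (Lf t) (Uf t) (z t)) ≠ 0 :=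
    (div_pos (by linarith) (by linarith)).ne'
  refine ((he.const_add 1).div (he.const_sub 1) (by linarith)).log hq |>.congr_deriv ?_
  have hd : Uf t - Lf t ≠ 0 := (sub_pos.2 hLU).ne'
  have h₁ : 1 + nerr (Lf t) (Uf t) (z t) ≠ 0 := by linarith
  have h₂ : 1 - nerr (Lf t) (Uf t) (z t) ≠ 0 := by linarith
  have h₃ : 1 - nerr (Lf t) (Uf t) (z t) ^ 2 ≠ 0 := by nlinarith
  simp only [Pi.div_apply, xhat]
  field_simp
  ring

end Derivatives

theorem mulVec_funnelController {n m : ℕ} (k : ℝ)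
    (g : (Fin n → ℝ) → Matrix (Fin n) (Fin m) ℝ) (γL γU γL' γU' : ℝ → Fin n → ℝ)
    (y : Fin n → ℝ) (t : ℝ) (hg : IsUnit (g y * (g y)ᵀ)) :
    (g y).mulVec (funnelController k g γL γU γL' γU' y t) = -fun i =>
      k * xhat (γL t i) (γU t i) (y i) * terr (γL t i) (γU t i) (y i)
        - 1 / 2 * (γU' t i - γL' t i) * nerr (γL t i) (γU t i) (y i) := by
  rw [funnelController, mulVec_neg, mulVec_mulVec, mulVec_mulVec,
    mul_nonsing_inv _ ((isUnit_iff_isUnit_det _).1 hg), one_mulVec]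

theorem abs_terr_le_of_closedLoop {Lf Uf z Lf' Uf' φ : ℝ → ℝ} {k M W a T : ℝ} (hk : 0 < k)
    (hin : ∀ s ∈ Ico a T, Lf s < z s ∧ z s < Uf s)
    (hW : ∀ s ∈ Ico a T, Uf s - Lf s ≤ W)
    (hM : ∀ s ∈ Ico a T, |2 * φ s - (Uf' s + Lf' s)| ≤ M)
    (hL : ∀ s ∈ Ico a T, HasDerivAt Lf (Lf' s) s)
    (hU : ∀ s ∈ Ico a T, HasDerivAt Uf (Uf' s) s)
    (hz : ∀ s ∈ Ico a T, HasDerivAt z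
      (φ s - (k * xhat (Lf s) (Uf s) (z s) * terr (Lf s) (Uf s) (z s)
        - 1 / 2 * (Uf' s - Lf' s) * nerr (Lf s) (Uf s) (z s))) s) :
    ∀ s ∈ Ico a T, |terr (Lf s) (Uf s) (z s)| ≤
      max |terr (Lf a) (Uf a) (z a)| (M * W / (8 * k) + 1) := by
  set ε := fun s => terr (Lf s) (Uf s) (z s)
  set ξ := fun s => xhat (Lf s) (Uf s) (z s)
  set R := max |ε a| (M * W / (8 * k) + 1)
  have hR : 0 ≤ R := (abs_nonneg _).trans (le_max_left _ _)
  have hsq : ∀ s ∈ Ico a T, HasDerivAt (fun r => ε r ^ 2)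
      (ξ s * ε s * (2 * φ s - (Uf' s + Lf' s)) - 2 * k * ξ s ^ 2 * ε s ^ 2) s := by
    intro s hs
    refine ((hasDerivAt_terr (hL s hs) (hU s hs) (hz s hs) (hin s hs)).pow 2).congr_deriv ?_
    ring
  -- On the level set `|ε| = R` the gain term `2 k ξ² ε²` dominates, since `ξ ≥ 4 / W`.
  have hdecay : ∀ s ∈ Ico a T, ε s ^ 2 = R ^ 2 →
      ξ s * ε s * (2 * φ s - (Uf' s + Lf' s)) - 2 * k * ξ s ^ 2 * ε s ^ 2 < 0 := by
    intro s hs hεR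
    have hεs : |ε s| = R := (sq_eq_sq₀ (abs_nonneg _) hR).1 (by rw [sq_abs, hεR])
    have hξW : 4 ≤ ξ s * (Uf s - Lf s) := four_le_xhat_mul (hin s hs)
    have hξ : 0 < ξ s := xhat_pos (hin s hs)
    have hWpos : 0 < W := (sub_pos.2 ((hin s hs).1.trans (hin s hs).2)).trans_le (hW s hs)
    have hMW : M * W < 2 * k * ξ s * |ε s| * W :=
      calc M * W < |ε s| * (8 * k) := by
            rw [← div_lt_iff₀ (by positivity), hεs]
            linarith [le_max_right |ε a| (M * W / (8 * k) + 1)]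
        _ = 2 * k * |ε s| * 4 := by ring
        _ ≤ 2 * k * |ε s| * (ξ s * W) := by
            gcongr
            exact hξW.trans (mul_le_mul_of_nonneg_left (hW s hs) hξ.le)
        _ = 2 * k * ξ s * |ε s| * W := by ring
    have hψ : |2 * φ s - (Uf' s + Lf' s)| < 2 * k * ξ s * |ε s| :=
      (hM s hs).trans_lt (lt_of_mul_lt_mul_right hMW hWpos.le)
    have hεpos : 0 < |ε s| :=
      pos_of_mul_pos_right ((abs_nonneg _).trans_lt hψ) (by positivity)
    have hεψ : ε s * (2 * φ s - (Uf' s + Lf' s)) < 2 * k * ξ s * ε s ^ 2 :=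
      calc ε s * (2 * φ s - (Uf' s + Lf' s))
          ≤ |ε s| * |2 * φ s - (Uf' s + Lf' s)| := by rw [← abs_mul]; exact le_abs_self _
        _ < |ε s| * (2 * k * ξ s * |ε s|) := mul_lt_mul_of_pos_left hψ hεpos
        _ = 2 * k * ξ s * ε s ^ 2 := by rw [← sq_abs (ε s)]; ring
    nlinarith [mul_lt_mul_of_pos_left hεψ hξ]
  intro s hs
  have hsub : Icc a s ⊆ Ico a T := fun r hr => ⟨hr.1, hr.2.trans_lt hs.2⟩
  have hbound : ε s ^ 2 ≤ R ^ 2 :=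
    image_le_of_deriv_right_lt_deriv_boundary' (B := fun _ => R ^ 2) (B' := fun _ => 0)
      (fun r hr => (hsq r (hsub hr)).continuousAt.continuousWithinAt)
      (fun r hr => (hsq r (hsub (Ico_subset_Icc_self hr))).hasDerivWithinAt)
      (sq_le_sq.2 (by rw [abs_of_nonneg hR]; exact le_max_left _ _)) continuousOn_const
      (fun _ _ => hasDerivWithinAt_const _ _ _)
      (fun r hr => hdecay r (hsub (Ico_subset_Icc_self hr))) ⟨hs.1, le_rfl⟩
  exact abs_le_of_sq_le_sq hbound hR

section FunnelInvariance

variable {n m : ℕ} {f : (Fin n → ℝ) → (Fin n → ℝ)} {g : (Fin n → ℝ) → Matrix (Fin n) (Fin m) ℝ}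
  {L U L' U' : ℝ → Fin n → ℝ} {k : ℝ} {x : ℝ → Fin n → ℝ}

theorem mem_funnel_of_forall_Ico {a T : ℝ} (hT : a < T) (hf : Continuous f)
    (hg : ∀ y, IsUnit (g y * (g y)ᵀ))
    (hL : ∀ t i, HasDerivAt (fun s => L s i) (L' t i) t)
    (hU : ∀ t i, HasDerivAt (fun s => U s i) (U' t i) t)
    (hL' : Continuous L') (hU' : Continuous U') (hLU : ∀ t ∈ Icc a T, ∀ i, L t i < U t i)
    (hk : 0 < k) (hxc : ContinuousOn x (Icc a T))
    (hin : ∀ s ∈ Ico a T, ∀ i, L s i < x s i ∧ x s i < U s i)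
    (hode : ∀ s ∈ Ico a T, HasDerivAt x
      (f (x s) + (g (x s)).mulVec (funnelController k g L U L' U' (x s) s)) s) (i : Fin n) :
    L T i < x T i ∧ x T i < U T i := by
  have hLc : ContinuousOn (fun s => L s i) (Icc a T) :=
    fun s _ => (hL s i).continuousAt.continuousWithinAt
  have hUc : ContinuousOn (fun s => U s i) (Icc a T) :=
    fun s _ => (hU s i).continuousAt.continuousWithinAt
  have hxi : ContinuousOn (fun s => x s i) (Icc a T) := (continuous_apply i).comp_continuousOn hxc
  obtain ⟨M, hM⟩ := isCompact_Icc.exists_bound_of_continuousOn (f := fun s =>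
    2 * f (x s) i - (U' s i + L' s i)) (by fun_prop)
  obtain ⟨W, hW⟩ := isCompact_Icc.exists_bound_of_continuousOn (hUc.sub hLc)
  have hcoord : ∀ s ∈ Ico a T, HasDerivAt (fun r => x r i)
      (f (x s) i - (k * xhat (L s i) (U s i) (x s i) * terr (L s i) (U s i) (x s i)
        - 1 / 2 * (U' s i - L' s i) * nerr (L s i) (U s i) (x s i))) s := by
    intro s hs
    have hxs := hasDerivAt_pi.1 (hode s hs) i
    rwa [mulVec_funnelController _ _ _ _ _ _ _ _ (hg _), Pi.add_apply, Pi.neg_apply,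
      ← sub_eq_add_neg] at hxs
  have hε := abs_terr_le_of_closedLoop hk (fun s hs => hin s hs i)
    (fun s hs => (le_abs_self _).trans (hW s (Ico_subset_Icc_self hs)))
    (fun s hs => (hM s (Ico_subset_Icc_self hs)).trans_eq' (Real.norm_eq_abs _).symm)
    (fun s _ => hL s i) (fun s _ => hU s i) hcoord
  set R := max |terr (L a i) (U a i) (x a i)| (M * W / (8 * k) + 1)
  set B := (Real.exp R - 1) / (Real.exp R + 1)
  have hB : B < 1 := (div_lt_one (by positivity)).2 (by linarith)
  have hnerr : ContinuousOn (fun s => nerr (L s i) (U s i) (x s i)) (Icc a T) :=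
    ((continuousOn_const.mul hxi).sub (hUc.add hLc)).div (hUc.sub hLc)
      fun s hs => (sub_pos.2 (hLU s hs i)).ne'
  -- `|ê| ≤ B` holds on `[a, T)`, hence on its closure `[a, T]`.
  set S := Icc a T ∩ (fun s => nerr (L s i) (U s i) (x s i)) ⁻¹' {y | |y| ≤ B}
  have hS : IsClosed S :=
    hnerr.preimage_isClosed_of_isClosed isClosed_Icc (isClosed_le continuous_abs continuous_const)
  have hIcoS : Ico a T ⊆ S := fun s hs =>
    ⟨Ico_subset_Icc_self hs, abs_nerr_le_of_abs_terr_le (hin s hs i) (hε s hs)⟩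
  have hTS : T ∈ S := by
    refine closure_minimal hIcoS hS ?_
    rw [closure_Ico hT.ne]
    exact right_mem_Icc.2 hT.le
  exact (abs_nerr_lt_one_iff (hLU T (right_mem_Icc.2 hT.le) i)).1 (hTS.2.trans_lt hB)

theorem funnel_invariant (hf : Continuous f) (hg : ∀ y, IsUnit (g y * (g y)ᵀ))
    (hL : ∀ t i, HasDerivAt (fun s => L s i) (L' t i) t)
    (hU : ∀ t i, HasDerivAt (fun s => U s i) (U' t i) t)
    (hL' : Continuous L') (hU' : Continuous U') (hLU : ∀ t ∈ Ici (0 : ℝ), ∀ i, L t i < U t i)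
    (hk : 0 < k) (hxc : ContinuousOn x (Ici 0))
    (hx0 : ∀ i, L 0 i < x 0 i ∧ x 0 i < U 0 i)
    (hode : ∀ t ∈ Ici (0 : ℝ), (∀ s ∈ Icc (0 : ℝ) t, ∀ i, L s i < x s i ∧ x s i < U s i) →
      HasDerivAt x (f (x t) + (g (x t)).mulVec (funnelController k g L U L' U' (x t) t)) t) :
    ∀ t ∈ Ici (0 : ℝ), ∀ i, L t i < x t i ∧ x t i < U t i := by
  have hLc (i : Fin n) : Continuous fun t => L t i :=
    continuous_iff_continuousAt.2 fun t => (hL t i).continuousAt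
  have hUc (i : Fin n) : Continuous fun t => U t i :=
    continuous_iff_continuousAt.2 fun t => (hU t i).continuousAt
  have hV : IsOpen {p : ℝ × (Fin n → ℝ) | ∀ i, L p.1 i < p.2 i ∧ p.2 i < U p.1 i} := by
    simp only [ofPred_forall, ofPred_and]
    exact isOpen_iInter_of_finite fun i =>
      (isOpen_lt (by fun_prop) (by fun_prop)).inter (isOpen_lt (by fun_prop) (by fun_prop))
  refine fun t ht => mapsTo_Ici_of_forall_Ico (γ := fun t => (t, x t))
    (continuousOn_id.prodMk hxc) hV hx0 (fun T hT hin => ?_) ht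
  exact mem_funnel_of_forall_Ico hT hf hg hL hU hL' hU' (fun s hs => hLU s hs.1) hk
    (hxc.mono Icc_subset_Ici_self) (fun s hs => hin hs)
    (fun s hs => hode s hs.1 fun r hr => hin ⟨hr.1, hr.2.trans_lt hs.2⟩)

end FunnelInvariance

section ReachabilityFunnel

theorem lt_rhoFun {ρinf : ℝ} (l t : ℝ) (hρ : ρinf < 1) : ρinf < rhoFun ρinf l t :=
  lt_add_of_pos_left _ (mul_pos (sub_pos.2 hρ) (Real.exp_pos _))

theorem rhoFun_le_one {ρinf l t : ℝ} (hρ : ρinf ≤ 1) (hl : 0 ≤ l) (ht : 0 ≤ t) :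
    rhoFun ρinf l t ≤ 1 := by
  have : Real.exp (-l * t) ≤ 1 := Real.exp_le_one_iff.2 (by nlinarith)
  rw [rhoFun]
  nlinarith

theorem tendsto_rhoFun (ρinf : ℝ) {l : ℝ} (hl : 0 < l) :
    Tendsto (rhoFun ρinf l) atTop (𝓝 ρinf) := by
  have hexp : Tendsto (fun t => Real.exp (-l * t)) atTop (𝓝 0) :=
    Real.tendsto_exp_atBot.comp (tendsto_id.const_mul_atTop_of_neg (neg_neg_of_pos hl))
  have h := (hexp.const_mul (1 - ρinf)).add_const ρinf
  rwa [mul_zero, zero_add] at h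

theorem hasDerivAt_rhoFun (ρinf l t : ℝ) :
    HasDerivAt (rhoFun ρinf l) (-(l * ((1 - ρinf) * Real.exp (-l * t)))) t := by
  have hexp : HasDerivAt (fun s => Real.exp (-l * s)) (Real.exp (-l * t) * -l) t :=
    ((hasDerivAt_id t).const_mul (-l)).exp.congr_deriv (by simp only [id]; ring)
  exact ((hexp.const_mul (1 - ρinf)).add_const ρinf).congr_deriv (by ring)

variable {n : ℕ} {η Xlow Xhigh l ρinf : Fin n → ℝ} {i : Fin n}

theorem hasDerivAt_rhoL (t : ℝ) :
    HasDerivAt (fun s => rhoL η Xlow l ρinf s i) (rhoL' η Xlow l ρinf t i) t :=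
  (((hasDerivAt_rhoFun _ _ t).const_mul _).const_sub _).congr_deriv (by simp only [rhoL']; ring)

theorem hasDerivAt_rhoU (t : ℝ) :
    HasDerivAt (fun s => rhoU η Xhigh l ρinf s i) (rhoU' η Xhigh l ρinf t i) t :=
  (((hasDerivAt_rhoFun _ _ t).const_mul _).const_add _).congr_deriv (by simp only [rhoU']; ring)

theorem continuous_rhoL' : Continuous (rhoL' η Xlow l ρinf) := by
  unfold rhoL'
  fun_prop

theorem continuous_rhoU' : Continuous (rhoU' η Xhigh l ρinf) := by
  unfold rhoU'
  fun_prop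

theorem rhoL_lt_rhoU {t : ℝ} (hX : Xlow i < Xhigh i) (hρ : 0 < rhoFun (ρinf i) (l i) t) :
    rhoL η Xlow l ρinf t i < rhoU η Xhigh l ρinf t i := by
  simp only [rhoL, rhoU]
  nlinarith

theorem le_rhoL_of_rhoFun_le {t r : ℝ} (hη : Xlow i ≤ η i) (h : rhoFun (ρinf i) (l i) t ≤ r) :
    η i - (η i - Xlow i) * r ≤ rhoL η Xlow l ρinf t i :=
  sub_le_sub_left (mul_le_mul_of_nonneg_left h (sub_nonneg.2 hη)) _

theorem rhoU_le_of_rhoFun_le {t r : ℝ} (hη : η i ≤ Xhigh i) (h : rhoFun (ρinf i) (l i) t ≤ r) :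
    rhoU η Xhigh l ρinf t i ≤ η i + (Xhigh i - η i) * r :=
  add_le_add_right (mul_le_mul_of_nonneg_left h (sub_nonneg.2 hη)) _

end ReachabilityFunnel
theorem reachability_controller_general {n m : ℕ}
    (f : (Fin n → ℝ) → (Fin n → ℝ))
    (g : (Fin n → ℝ) → Matrix (Fin n) (Fin m) ℝ)
    (hf : LocallyLipschitz f)
    (hpd : ∀ y, (g y * (g y)ᵀ).PosDef)
    (Xlow Xhigh η l ρinf : Fin n → ℝ)
    (hX : ∀ i, Xlow i < η i ∧ η i < Xhigh i)
    (hl : ∀ i, 0 < l i)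
    (hρinf : ∀ i, ρinf i ∈ Ioo (0 : ℝ) 1)
    (k : ℝ) (hk : 0 < k)
    (x : ℝ → Fin n → ℝ)
    (hxc : ContinuousOn x (Ici 0))
    (hx0 : ∀ i, rhoL η Xlow l ρinf 0 i < x 0 i ∧ x 0 i < rhoU η Xhigh l ρinf 0 i)
    (hode : ∀ t ∈ Ici (0 : ℝ),
      (∀ s ∈ Icc (0 : ℝ) t, ∀ i,
        rhoL η Xlow l ρinf s i < x s i ∧ x s i < rhoU η Xhigh l ρinf s i) →
      HasDerivAt x
        (f (x t) + (g (x t)).mulVec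
          (funnelController k g (rhoL η Xlow l ρinf) (rhoU η Xhigh l ρinf)
            (rhoL' η Xlow l ρinf) (rhoU' η Xhigh l ρinf) (x t) t)) t) :
    (∀ t ∈ Ici (0 : ℝ), ∀ i,
      rhoL η Xlow l ρinf t i < x t i ∧ x t i < rhoU η Xhigh l ρinf t i ∧
        Xlow i < x t i ∧ x t i < Xhigh i) ∧
    (∀ Tset : Set (Fin n → ℝ), ∀ ρ' : Fin n → ℝ, (∀ i, ρinf i < ρ' i) →
      (Set.univ.pi fun i =>
        Icc (η i - (η i - Xlow i) * ρ' i) (η i + (Xhigh i - η i) * ρ' i)) ⊆ Tset →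
      ∃ t ≥ (0 : ℝ), x t ∈ Tset) := by
  have hρ (i : Fin n) (t : ℝ) : ρinf i < rhoFun (ρinf i) (l i) t := lt_rhoFun _ t (hρinf i).2
  have hinv := funnel_invariant hf.continuous (fun y => (hpd y).isUnit)
    (fun t _ => hasDerivAt_rhoL t) (fun t _ => hasDerivAt_rhoU t) continuous_rhoL' continuous_rhoU'
    (fun t _ i => rhoL_lt_rhoU ((hX i).1.trans (hX i).2) ((hρinf i).1.trans (hρ i t)))
    hk hxc hx0 hode
  refine ⟨fun t ht i => ?_, fun Tset ρ' hρ' hsub => ?_⟩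
  · have hρ1 := rhoFun_le_one (hρinf i).2.le (hl i).le ht
    have hL := le_rhoL_of_rhoFun_le (hX i).1.le hρ1
    have hU := rhoU_le_of_rhoFun_le (hX i).2.le hρ1
    obtain ⟨hxL, hxU⟩ := hinv t ht i
    exact ⟨hxL, hxU, by linarith, by linarith⟩
  · have hlim : ∀ᶠ t in atTop, ∀ i, rhoFun (ρinf i) (l i) t ≤ ρ' i := eventually_all.2 fun i =>
      ((tendsto_rhoFun _ (hl i)).eventually_lt_const (hρ' i)).mono fun _ h => h.le
    obtain ⟨t, ht, ht0⟩ := (hlim.and (eventually_ge_atTop 0)).exists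
    refine ⟨t, ht0, hsub fun i _ => ⟨?_, ?_⟩⟩
    · exact (le_rhoL_of_rhoFun_le (hX i).1.le (ht i)).trans (hinv t ht0 i).1.le
    · exact (hinv t ht0 i).2.le.trans (rhoU_le_of_rhoFun_le (hX i).2.le (ht i))

/-- Theorem 1 (controller for reachability): with the funnel controller built from the
reachability funnel, every admissible closed-loop solution (i) stays strictly inside the
funnel and the state-space box for all time, and (ii) reaches in finite time any target set
containing the rectangle `∏ᵢ [ηᵢ − c̲ᵢ ρ'ᵢ, ηᵢ + c̄ᵢ ρ'ᵢ]` with `ρ'ᵢ > ρ_{i,∞}`. -/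
theorem reachability_controller {n m : ℕ}
    (f : (Fin n → ℝ) → (Fin n → ℝ))
    (g : (Fin n → ℝ) → Matrix (Fin n) (Fin m) ℝ)
    (hf : LocallyLipschitz f)
    (hg : LocallyLipschitz (fun y => fun i j => g y i j))
    (hpd : ∀ y, (g y * (g y)ᵀ).PosDef)
    (Xlow Xhigh η l ρinf : Fin n → ℝ)
    (hX : ∀ i, Xlow i < η i ∧ η i < Xhigh i)
    (hl : ∀ i, 0 < l i)
    (hρinf : ∀ i, ρinf i ∈ Ioo (0 : ℝ) 1)
    (k : ℝ) (hk : 0 < k)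
    (x : ℝ → Fin n → ℝ)
    (hxc : ContinuousOn x (Ici 0))
    (hx0 : ∀ i, rhoL η Xlow l ρinf 0 i < x 0 i ∧ x 0 i < rhoU η Xhigh l ρinf 0 i)
    (hode : ∀ t ∈ Ici (0 : ℝ),
      (∀ s ∈ Icc (0 : ℝ) t, ∀ i,
        rhoL η Xlow l ρinf s i < x s i ∧ x s i < rhoU η Xhigh l ρinf s i) →
      HasDerivAt x
        (f (x t) + (g (x t)).mulVec
          (funnelController k g (rhoL η Xlow l ρinf) (rhoU η Xhigh l ρinf)
            (rhoL' η Xlow l ρinf) (rhoU' η Xhigh l ρinf) (x t) t)) t) :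
    (∀ t ∈ Ici (0 : ℝ), ∀ i,
      rhoL η Xlow l ρinf t i < x t i ∧ x t i < rhoU η Xhigh l ρinf t i ∧
        Xlow i < x t i ∧ x t i < Xhigh i) ∧
    (∀ Tset : Set (Fin n → ℝ), ∀ ρ' : Fin n → ℝ, (∀ i, ρinf i < ρ' i) →
      (Set.univ.pi fun i =>
        Icc (η i - (η i - Xlow i) * ρ' i) (η i + (Xhigh i - η i) * ρ' i)) ⊆ Tset →
      ∃ t ≥ (0 : ℝ), x t ∈ Tset) :=
  reachability_controller_general f g hf hpd Xlow Xhigh η l ρinf hX hl hρinf k hk x hxc hx0 hode
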